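/- arXiv:2509.18673 — 6 statements merged into one kernel-verified Lean document; each statement's English description precedes it below -/
import Mathlib

section
/- Fix n agents, m items, valuations v_i(j) ∈ ℝ, a constant c > 0 (the value of the added item m+1 for every agent), and ε > 0. Let P = {(i,j) : i ∈ [n], j ∈ [m], v_i(j) ≠ 0}. For a perturbation vector e = (e_{ij})_{(i,j)∈P} ∈ ℝ^P define v̄^e by v̄^e_i(j) = v_i(j) − e_{ij} for (i,j) ∈ P, v̄^e_i(j) = 0 when j ≤ m and v_i(j) = 0, and v̄^e_i(m+1) = c for all i. Then the set of e ∈ [0,ε]^P for which there exists a simple cycle (j_1, i_1, j_2, i_2, …, j_k, i_k, j_1), k ≥ 2, in the complete bipartite graph between the n agents and the m+1 items (no agent or item repeated), with v̄^e_{i_ℓ}(j_ℓ) ≠ 0 and v̄^e_{i_ℓ}(j_{ℓ+1}) ≠ 0 for all ℓ ∈ [k] (indices cyclic, j_{k+1} = j_1) and ∏_{ℓ=1}^{k} v̄^e_{i_ℓ}(j_ℓ)/v̄^e_{i_ℓ}(j_{ℓ+1}) = 1, has Lebesgue measure zero in ℝ^P. -/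
open Finset MeasureTheory
open scoped Classical

/-- The perturbed valuation `v̄^e`: for an original item `j ≤ m` with `v i j ≠ 0`
we subtract the perturbation `e (i,j)`; zero values stay zero; the added item
`m+1` is valued `c` by everyone. -/
noncomputable def vbar {n m : ℕ} (v : Fin n → Fin m → ℝ) (c : ℝ)
    (e : {p : Fin n × Fin m // v p.1 p.2 ≠ 0} → ℝ) (i : Fin n) (j : Fin (m+1)) : ℝ :=
  if h : (j : ℕ) < m then
    (if hv : v i (j.castLT h) ≠ 0 then v i (j.castLT h) - e ⟨(i, j.castLT h), hv⟩ else 0)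
  else c

/-
There are only countably many candidate cycles, so it suffices to fix one. Any
cycle of length at least two visits an original item `j`, and the edge to its agent `i` must
have `v i j ≠ 0`, since otherwise that edge value vanishes. The coordinate `e (i, j)` enters
only the numerator factor `v i j - e (i, j)`, so the condition "product of ratios equals 1"
pins it down once the other coordinates are fixed. Hence every line parallel to that
coordinate axis meets the degenerate set in at most one point, and Fubini gives measure zero.
-/

lemma MeasureTheory.volume_pi_eq_zero_of_coord_determined {ι : Type*} [Fintype ι] [DecidableEq ι]
    (i₀ : ι) {S : Set (ι → ℝ)} (hS : MeasurableSet S)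
    (h : ∀ x ∈ S, ∀ y ∈ S, (∀ i ≠ i₀, x i = y i) → x = y) :
    volume S = 0 := by
  let φ := MeasurableEquiv.piEquivPiSubtypeProd (fun _ : ι => ℝ) (· ≠ i₀)
  have hφ := (volume_preserving_piEquivPiSubtypeProd (fun _ : ι => ℝ) (· ≠ i₀)).symm φ
  have : Nonempty {i // ¬i ≠ i₀} := ⟨⟨i₀, not_not.2 rfl⟩⟩
  rw [← hφ.measure_preimage_equiv, Measure.volume_eq_prod,
    Measure.measure_prod_null (φ.symm.measurable hS)]
  refine Filter.Eventually.of_forall fun a => Set.Subsingleton.measure_zero ?_ _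
  intro b₁ hb₁ b₂ hb₂
  have hagree : ∀ i ≠ i₀, φ.symm (a, b₁) i = φ.symm (a, b₂) i := fun i hi => by
    simp [φ, MeasurableEquiv.piEquivPiSubtypeProd, hi]
  exact congrArg Prod.snd (φ.symm.injective (h _ hb₁ _ hb₂ hagree))

lemma Finset.apply_eq_of_prod_eq_prod {ι M : Type*} [Fintype ι] [DecidableEq ι]
    [CommGroupWithZero M] {a b : ι → M} (i₀ : ι) (hprod : ∏ i, a i = ∏ i, b i)
    (heq : ∀ i ≠ i₀, a i = b i) (hne : ∀ i ≠ i₀, a i ≠ 0) :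
    a i₀ = b i₀ := by
  rw [← mul_prod_erase univ a (mem_univ i₀), ← mul_prod_erase univ b (mem_univ i₀),
    prod_congr rfl fun i hi => heq i (ne_of_mem_erase hi)] at hprod
  refine mul_right_cancel₀ ?_ hprod
  exact prod_ne_zero_iff.2 fun i hi => heq i (ne_of_mem_erase hi) ▸ hne i (ne_of_mem_erase hi)

lemma Fin.exists_eq_castSucc_of_injective {k m : ℕ} {f : Fin (k + 2) → Fin (m + 1)}
    (hf : Function.Injective f) : ∃ l j, f l = Fin.castSucc j := by
  rcases Fin.eq_castSucc_or_eq_last (f 0) with ⟨j, hj⟩ | h₀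
  · exact ⟨0, j, hj⟩
  rcases Fin.eq_castSucc_or_eq_last (f 1) with ⟨j, hj⟩ | h₁
  · exact ⟨1, j, hj⟩
  exact absurd (hf (h₀.trans h₁.symm)) zero_ne_one

section vbar

variable {n m : ℕ} {v : Fin n → Fin m → ℝ} {c : ℝ}

variable (v) in
/-- The index set `P` of the perturbation vectors. -/
abbrev SupportPairs : Type := {p : Fin n × Fin m // v p.1 p.2 ≠ 0}

lemma vbar_castSucc_of_ne {e : SupportPairs v → ℝ} {i : Fin n} {j : Fin m} (hv : v i j ≠ 0) :
    vbar v c e i j.castSucc = v i j - e ⟨(i, j), hv⟩ := by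
  simp [vbar, hv]

lemma vbar_castSucc_of_eq {e : SupportPairs v → ℝ} {i : Fin n} {j : Fin m} (hv : v i j = 0) :
    vbar v c e i j.castSucc = 0 := by
  simp [vbar, hv]

lemma vbar_last (e : SupportPairs v → ℝ) (i : Fin n) : vbar v c e i (Fin.last m) = c := by
  simp [vbar]

lemma vbar_congr {e₁ e₂ : SupportPairs v → ℝ} {i : Fin n} {j : Fin (m + 1)}
    (h : ∀ p : SupportPairs v, (p.1.1, p.1.2.castSucc) = (i, j) → e₁ p = e₂ p) :
    vbar v c e₁ i j = vbar v c e₂ i j := by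
  rcases Fin.eq_castSucc_or_eq_last j with ⟨j, rfl⟩ | rfl
  · by_cases hv : v i j = 0
    · rw [vbar_castSucc_of_eq hv, vbar_castSucc_of_eq hv]
    · rw [vbar_castSucc_of_ne hv, vbar_castSucc_of_ne hv, h ⟨(i, j), hv⟩ rfl]
  · rw [vbar_last, vbar_last]

lemma measurable_vbar (i : Fin n) (j : Fin (m + 1)) :
    Measurable fun e : SupportPairs v → ℝ => vbar v c e i j := by
  unfold vbar
  split_ifs
  · exact measurable_const.sub (measurable_pi_apply _)
  all_goals exact measurable_const

variable (v c) in
/-- The perturbations `e` for which the agents `ags` and items `js` form a degenerate cycle: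
agent `ags l` is joined to the items `js l` and `js (l + 1)`. -/
def degenerateCycleSet {k : ℕ} (js : Fin (k + 2) → Fin (m + 1)) (ags : Fin (k + 2) → Fin n) :
    Set (SupportPairs v → ℝ) :=
  {e | (∀ l, vbar v c e (ags l) (js l) ≠ 0 ∧ vbar v c e (ags l) (js (l + 1)) ≠ 0) ∧
    ∏ l, vbar v c e (ags l) (js l) / vbar v c e (ags l) (js (l + 1)) = 1}

lemma measurableSet_degenerateCycleSet {k : ℕ} (js : Fin (k + 2) → Fin (m + 1))
    (ags : Fin (k + 2) → Fin n) : MeasurableSet (degenerateCycleSet v c js ags) := by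
  refine measurableSet_setOfPred.2 (Measurable.and (Measurable.forall fun l => ?_) ?_)
  · exact ((measurable_vbar _ _).eq measurable_const).not.and
      ((measurable_vbar _ _).eq measurable_const).not
  · exact (Finset.measurable_prod _ fun l _ =>
      (measurable_vbar _ _).div (measurable_vbar _ _)).eq measurable_const

lemma prod_vbar_eq_of_mem_degenerateCycleSet {k : ℕ} {js : Fin (k + 2) → Fin (m + 1)}
    {ags : Fin (k + 2) → Fin n} {e : SupportPairs v → ℝ}
    (he : e ∈ degenerateCycleSet v c js ags) :
    ∏ l, vbar v c e (ags l) (js l) = ∏ l, vbar v c e (ags l) (js (l + 1)) := by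
  rw [← div_eq_one_iff_eq (prod_ne_zero_iff.2 fun l _ => (he.1 l).2), ← prod_div_distrib]
  exact he.2

lemma volume_degenerateCycleSet {k : ℕ} {js : Fin (k + 2) → Fin (m + 1)}
    {ags : Fin (k + 2) → Fin n} (hjs : Function.Injective js) (hags : Function.Injective ags) :
    volume (degenerateCycleSet v c js ags) = 0 := by
  obtain ⟨l₀, j₀, hl₀⟩ := Fin.exists_eq_castSucc_of_injective hjs
  by_cases hv : v (ags l₀) j₀ = 0
  · refine measure_mono_null (fun e he => ?_) measure_empty
    exact (he.1 l₀).1 (hl₀ ▸ vbar_castSucc_of_eq hv)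
  refine volume_pi_eq_zero_of_coord_determined ⟨(ags l₀, j₀), hv⟩
    (measurableSet_degenerateCycleSet js ags) fun e₁ he₁ e₂ he₂ hagree => ?_
  have hvbar : ∀ l l', (ags l, js l') ≠ (ags l₀, js l₀) →
      vbar v c e₁ (ags l) (js l') = vbar v c e₂ (ags l) (js l') := fun l l' hne =>
    vbar_congr fun p hp => hagree p fun hp₀ => hne (by subst hp₀; rw [hl₀]; exact hp.symm)
  have hsucc : ∀ l, (ags l, js (l + 1)) ≠ (ags l₀, js l₀) := fun l hl => by
    obtain rfl := hags (Prod.ext_iff.1 hl).1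
    exact add_ne_left.2 one_ne_zero (hjs (Prod.ext_iff.1 hl).2)
  have hl₀e : vbar v c e₁ (ags l₀) (js l₀) = vbar v c e₂ (ags l₀) (js l₀) := by
    refine Finset.apply_eq_of_prod_eq_prod l₀ ?_
      (fun l hl => hvbar l l fun h => hl (hags (Prod.ext_iff.1 h).1)) fun l _ => (he₁.1 l).1
    rw [prod_vbar_eq_of_mem_degenerateCycleSet he₁, prod_vbar_eq_of_mem_degenerateCycleSet he₂]
    exact prod_congr rfl fun l _ => hvbar l (l + 1) (hsucc l)
  rw [hl₀, vbar_castSucc_of_ne hv, vbar_castSucc_of_ne hv, sub_right_inj] at hl₀e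
  funext p
  by_cases hp : p = ⟨(ags l₀, j₀), hv⟩
  · exact hp ▸ hl₀e
  · exact hagree p hp

end vbar

/-- Cycles of length `k ≥ 2` are encoded with index type `Fin (k+2)`, whose cyclic addition
realises the cyclic successor `ℓ + 1`. -/
theorem stmt2_general (n m : ℕ) (v : Fin n → Fin m → ℝ) (c ε : ℝ) :
    volume {e : {p : Fin n × Fin m // v p.1 p.2 ≠ 0} → ℝ |
      (∀ p, e p ∈ Set.Icc (0:ℝ) ε) ∧
      ∃ (k : ℕ) (js : Fin (k+2) → Fin (m+1)) (ags : Fin (k+2) → Fin n),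
        Function.Injective js ∧ Function.Injective ags ∧
        (∀ l, vbar v c e (ags l) (js l) ≠ 0 ∧ vbar v c e (ags l) (js (l+1)) ≠ 0) ∧
        (∏ l, vbar v c e (ags l) (js l) / vbar v c e (ags l) (js (l+1))) = 1} = 0 := by
  refine measure_mono_null (t := ⋃ (k : ℕ) (js : Fin (k + 2) → Fin (m + 1))
      (ags : Fin (k + 2) → Fin n) (_ : Function.Injective js) (_ : Function.Injective ags),
      degenerateCycleSet v c js ags) ?_ ?_
  · rintro e ⟨-, k, js, ags, hjs, hags, hcycle⟩
    simp only [Set.mem_iUnion]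
    exact ⟨k, js, ags, hjs, hags, hcycle⟩
  · exact measure_iUnion_null fun k => measure_iUnion_null fun js => measure_iUnion_null fun ags =>
      measure_iUnion_null fun hjs => measure_iUnion_null fun hags =>
        volume_degenerateCycleSet hjs hags

/-- the set of perturbation vectors `e ∈ [0,ε]^P` for which the
perturbed instance has a "degenerate" simple cycle (alternating distinct items and
distinct agents, all edge values nonzero, product of value ratios equal to 1)
has Lebesgue measure zero. Cycles of length `k ≥ 2` are encoded with index type
`Fin (k+2)`, whose cyclic addition realises the cyclic successor `ℓ + 1`. -/
theorem stmt2 (n m : ℕ) (v : Fin n → Fin m → ℝ) (c ε : ℝ) (hc : 0 < c) (hε : 0 < ε) :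
    volume {e : {p : Fin n × Fin m // v p.1 p.2 ≠ 0} → ℝ |
      (∀ p, e p ∈ Set.Icc (0:ℝ) ε) ∧
      ∃ (k : ℕ) (js : Fin (k+2) → Fin (m+1)) (ags : Fin (k+2) → Fin n),
        Function.Injective js ∧ Function.Injective ags ∧
        (∀ l, vbar v c e (ags l) (js l) ≠ 0 ∧ vbar v c e (ags l) (js (l+1)) ≠ 0) ∧
        (∏ l, vbar v c e (ags l) (js l) / vbar v c e (ags l) (js (l+1))) = 1} = 0 :=
  stmt2_general n m v c ε
end

section
/- Let λ > 0 satisfy: for all agents i and all bundles S,T ⊆ [m], if v_i(S) − v_i(T) > 0 then v_i(S) − v_i(T) ≥ λ. Let 0 < ε < λ/(2m) and let v̄ be a perturbed valuation profile on items {1,…,m+1} with v̄_i(m+1) = λ/2 for all i, and for j ≤ m: v_i(j) − ε ≤ v̄_i(j) ≤ v_i(j). If an allocation A = (A_1,…,A_n) of the items {1,…,m+1} is IEF1 with respect to the valuations v̄, then the allocation (A_1 ∖ {m+1}, …, A_n ∖ {m+1}) of the items {1,…,m} is IEF1 with respect to the valuations v. -/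
open Finset

/-- Value of a bundle under an additive valuation. -/
def bval {α : Type*} (u : α → ℝ) (S : Finset α) : ℝ := ∑ j ∈ S, u j

/-- An allocation: every item belongs to exactly one agent's bundle. -/
def IsAlloc {n : ℕ} {I : Type*} (A : Fin n → Finset I) : Prop :=
  ∀ j : I, ∃! i : Fin n, j ∈ A i

/-- IEF1 with respect to valuations `u`. -/
def IEF1 {n : ℕ} {I : Type*} [DecidableEq I] (u : Fin n → I → ℝ)
    (A : Fin n → Finset I) : Prop :=
  ∀ i : Fin n, ∃ S : Finset I, S.card ≤ 1 ∧
    ∀ j : Fin n, bval (u i) (A j) ≤ bval (u i) (symmDiff (A i) S)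

/-- Remove the added item `m+1` from a bundle of the enlarged instance,
viewing the result as a bundle of the original `m` items. -/
noncomputable def drop {m : ℕ} (S : Finset (Fin (m+1))) : Finset (Fin m) :=
  S.preimage Fin.castSucc (Fin.castSucc_injective m).injOn


lemma drop_symmDiff {m : ℕ} (S T : Finset (Fin (m+1))) :
    drop (symmDiff S T) = symmDiff (drop S) (drop T) := by
  ext j
  simp [drop, Finset.mem_preimage, Finset.mem_symmDiff]

lemma drop_image {m : ℕ} (S : Finset (Fin (m+1))) :
    (drop S).image Fin.castSucc = S.erase (Fin.last m) := by
  ext x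
  simp only [Finset.mem_image, drop, Finset.mem_preimage, Finset.mem_erase]
  constructor
  · rintro ⟨j, hj, rfl⟩
    exact ⟨Fin.castSucc_lt_last j |>.ne, hj⟩
  · rintro ⟨hne, hx⟩
    obtain ⟨y, rfl⟩ := Fin.exists_castSucc_eq.2 hne
    exact ⟨y, hx, rfl⟩

lemma drop_card {m : ℕ} (S : Finset (Fin (m+1))) : (drop S).card ≤ S.card := by
  calc (drop S).card = ((drop S).image Fin.castSucc).card :=
        (Finset.card_image_of_injective _ (Fin.castSucc_injective m)).symm
    _ ≤ S.card := Finset.card_le_card (by rw [drop_image]; exact Finset.erase_subset _ _)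

lemma bval_split {m : ℕ} (u : Fin (m+1) → ℝ) (S : Finset (Fin (m+1))) :
    bval u S = ∑ j ∈ drop S, u j.castSucc
      + (if Fin.last m ∈ S then u (Fin.last m) else 0) := by
  have h1 : ∑ j ∈ drop S, u j.castSucc = ∑ x ∈ S.erase (Fin.last m), u x := by
    rw [← drop_image, Finset.sum_image]
    intro x _ y _ h
    exact Fin.castSucc_injective m h
  rw [h1, bval]
  by_cases h : Fin.last m ∈ S
  · simp only [h, if_true]
    rw [Finset.sum_erase_add S u h]
  · simp [h, Finset.erase_eq_of_notMem h]

/-- an IEF1 allocation of the perturbed instance, with the added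
item removed, is IEF1 for the original instance. -/
theorem stmt4 (n m : ℕ) (v : Fin n → Fin m → ℝ) (vb : Fin n → Fin (m+1) → ℝ)
    (lam ε : ℝ) (hlam : 0 < lam)
    (hgap : ∀ (i : Fin n) (S T : Finset (Fin m)),
      0 < bval (v i) S - bval (v i) T → lam ≤ bval (v i) S - bval (v i) T)
    (hε0 : 0 < ε) (hε : ε < lam / (2 * m))
    (hlast : ∀ i, vb i (Fin.last m) = lam / 2)
    (hpert : ∀ (i : Fin n) (j : Fin m),
      v i j - ε ≤ vb i j.castSucc ∧ vb i j.castSucc ≤ v i j)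
    (A : Fin n → Finset (Fin (m+1))) (hA : IsAlloc A)
    (hIEF1 : IEF1 vb A) :
    IEF1 v (fun i => drop (A i)) := by
  have hmε : (m:ℝ) * ε < lam / 2 := by
    rcases Nat.eq_zero_or_pos m with hm0 | hm0
    · subst hm0; simp; linarith
    · have hm' : (0:ℝ) < m := by exact_mod_cast hm0
      have h2 : (m:ℝ) * ε < (m:ℝ) * (lam/(2*m)) := mul_lt_mul_of_pos_left hε hm'
      have h3 : (m:ℝ) * (lam/(2*m)) = lam/2 := by field_simp
      linarith
  have upper : ∀ (i : Fin n) (S : Finset (Fin (m+1))),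
      bval (vb i) S ≤ bval (v i) (drop S) + lam/2 := by
    intro i S
    rw [bval_split]
    have h1 : ∑ j ∈ drop S, vb i j.castSucc ≤ ∑ j ∈ drop S, v i j :=
      Finset.sum_le_sum fun j _ => (hpert i j).2
    have h2 : (if Fin.last m ∈ S then vb i (Fin.last m) else 0) ≤ lam/2 := by
      split
      · rw [hlast]
      · linarith
    simp only [bval]
    linarith
  have lower : ∀ (i : Fin n) (S : Finset (Fin (m+1))),
      bval (v i) (drop S) - (m:ℝ)*ε ≤ bval (vb i) S := by
    intro i S
    rw [bval_split]
    have h1 : ∑ j ∈ drop S, (v i j - ε) ≤ ∑ j ∈ drop S, vb i j.castSucc :=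
      Finset.sum_le_sum fun j _ => (hpert i j).1
    rw [Finset.sum_sub_distrib, Finset.sum_const, nsmul_eq_mul] at h1
    have hc : ((drop S).card : ℝ) ≤ m := by
      have h := (drop S).card_le_univ
      simp at h
      exact_mod_cast h
    have hce : ((drop S).card : ℝ) * ε ≤ (m:ℝ) * ε :=
      mul_le_mul_of_nonneg_right hc hε0.le
    have h2 : (0:ℝ) ≤ if Fin.last m ∈ S then vb i (Fin.last m) else 0 := by
      split
      · rw [hlast]; linarith
      · exact le_refl 0
    simp only [bval]
    linarith
  intro i
  obtain ⟨S, hScard, hS⟩ := hIEF1 i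
  refine ⟨drop S, le_trans (drop_card S) hScard, ?_⟩
  intro j
  simp only
  by_contra hcon
  push_neg at hcon
  have hgap' := hgap i (drop (A j)) (symmDiff (drop (A i)) (drop S)) (by linarith)
  have key := hS j
  have u1 := upper i (symmDiff (A i) S)
  rw [drop_symmDiff] at u1
  have l1 := lower i (A j)
  linarith
end

section
/- Let ω > 0 satisfy: for all pairs of allocations A, B of the items [m], if Σ_{i=1}^n v_i(A_i) − Σ_{i=1}^n v_i(B_i) > 0 then Σ_{i=1}^n v_i(A_i) − Σ_{i=1}^n v_i(B_i) ≥ ω. Let 0 < η < 1 and 0 < ε < ηω/(2m). Let v̄ be a perturbed valuation profile on items {1,…,m+1} with v̄_i(m+1) = λ/2 > 0 for all i (some fixed λ > 0) and, for j ≤ m, v_i(j) − ε ≤ v̄_i(j) ≤ v_i(j). Fix any w in the simplex Δ_{n−1}. If an allocation A = (A_1,…,A_n) of {1,…,m+1} maximizes Σ_{i=1}^n (w_i + η) v̄_i(A_i) over all allocations, then the allocation (A_1 ∖ {m+1}, …, A_n ∖ {m+1}) of the items [m] is Pareto optimal with respect to the valuations v. -/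
open Finset

/-- Pareto optimality with respect to valuations `u`. -/
def ParetoOptimal {n : ℕ} {I : Type*} (u : Fin n → I → ℝ) (A : Fin n → Finset I) : Prop :=
  ¬ ∃ B : Fin n → Finset I, IsAlloc B ∧
      (∀ i, bval (u i) (A i) ≤ bval (u i) (B i)) ∧
      ∃ a, bval (u a) (A a) < bval (u a) (B a)

lemma drop_mem {m : ℕ} (S : Finset (Fin (m+1))) (k : Fin m) :
    k ∈ drop S ↔ k.castSucc ∈ S := by
  simp [drop]

lemma sum_split {m : ℕ} (S : Finset (Fin (m+1))) (f : Fin (m+1) → ℝ) :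
    ∑ j ∈ S, f j = (∑ k ∈ drop S, f k.castSucc)
      + (if Fin.last m ∈ S then f (Fin.last m) else 0) := by
  have hSeq : S = (drop S).image Fin.castSucc ∪ S.filter (fun j => j = Fin.last m) := by
    ext j
    rcases Fin.eq_castSucc_or_eq_last j with ⟨k, rfl⟩ | rfl
    · simp [drop_mem, Finset.mem_union, Finset.mem_image, Finset.mem_filter,
        (Fin.castSucc_lt_last k).ne, (Fin.castSucc_injective m).eq_iff]
    · simp only [Finset.mem_union, Finset.mem_image, Finset.mem_filter]
      constructor
      · intro h; exact Or.inr ⟨h, trivial⟩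
      · rintro (⟨k, _, hk⟩ | ⟨h, _⟩)
        · exact absurd hk (Fin.castSucc_lt_last k).ne
        · exact h
  have hdisj : Disjoint ((drop S).image Fin.castSucc)
      (S.filter (fun j => j = Fin.last m)) := by
    rw [Finset.disjoint_left]
    rintro j hj hj'
    obtain ⟨k, -, rfl⟩ := Finset.mem_image.1 hj
    exact (Fin.castSucc_lt_last k).ne (Finset.mem_filter.1 hj').2
  conv_lhs => rw [hSeq]
  rw [Finset.sum_union hdisj,
    Finset.sum_image (fun x _ y _ h => Fin.castSucc_injective m h)]
  congr 1
  by_cases h : Fin.last m ∈ S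
  · rw [if_pos h]
    have : S.filter (fun j => j = Fin.last m) = {Fin.last m} := by
      ext j
      simp only [Finset.mem_filter, Finset.mem_singleton]
      exact ⟨fun hj => hj.2, fun hj => ⟨hj ▸ h, hj⟩⟩
    simp [this]
  · rw [if_neg h]
    have : S.filter (fun j => j = Fin.last m) = ∅ := by
      ext j
      simp only [Finset.mem_filter, Finset.notMem_empty, iff_false, not_and]
      intro hj hjl; exact h (hjl ▸ hj)
    simp [this]

/-- any allocation maximizing the `(w+η)`-weighted welfare of the
perturbed instance becomes, after removing the added item `m+1`, a Pareto
optimal allocation of the original instance. -/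
theorem stmt6 (n m : ℕ) (v : Fin n → Fin m → ℝ) (vb : Fin n → Fin (m+1) → ℝ)
    (ω lam η ε : ℝ) (hω : 0 < ω)
    (hgapSW : ∀ A B : Fin n → Finset (Fin m), IsAlloc A → IsAlloc B →
      0 < (∑ i, bval (v i) (A i)) - (∑ i, bval (v i) (B i)) →
      ω ≤ (∑ i, bval (v i) (A i)) - (∑ i, bval (v i) (B i)))
    (hη0 : 0 < η) (hη1 : η < 1) (hε0 : 0 < ε) (hε : ε < η * ω / (2 * m))
    (hlam : 0 < lam) (hlast : ∀ i, vb i (Fin.last m) = lam / 2)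
    (hpert : ∀ (i : Fin n) (j : Fin m),
      v i j - ε ≤ vb i j.castSucc ∧ vb i j.castSucc ≤ v i j)
    (w : Fin n → ℝ) (hw : w ∈ stdSimplex ℝ (Fin n))
    (A : Fin n → Finset (Fin (m+1))) (hA : IsAlloc A)
    (hopt : ∀ B : Fin n → Finset (Fin (m+1)), IsAlloc B →
      ∑ i, (w i + η) * bval (vb i) (B i) ≤ ∑ i, (w i + η) * bval (vb i) (A i)) :
    ParetoOptimal v (fun i => drop (A i)) := by
  rintro ⟨B, hB, hle, a, ha⟩
  have hle' : ∀ i, bval (v i) (drop (A i)) ≤ bval (v i) (B i) := hle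
  have ha' : bval (v a) (drop (A a)) < bval (v a) (B a) := ha
  have hw0 : ∀ i, 0 ≤ w i := fun i => hw.1 i
  have hw1 : ∀ i, w i ≤ 1 := by
    intro i
    calc w i ≤ ∑ j, w j := Finset.single_le_sum (fun j _ => hw.1 j) (Finset.mem_univ i)
    _ = 1 := hw.2
  -- m = 0 would contradict hε
  have hm : 0 < (m : ℝ) := by
    rcases Nat.eq_zero_or_pos m with rfl | hm
    · simp at hε; linarith
    · exact_mod_cast hm
  have h2em : ε * (2 * m) < η * ω := by
    rw [lt_div_iff₀ (by positivity)] at hε; exact hε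
  -- the dropped allocation
  set Ad : Fin n → Finset (Fin m) := fun i => drop (A i) with hAdDef
  have hAdAlloc : IsAlloc Ad := by
    intro k
    obtain ⟨i, hi, hu⟩ := hA k.castSucc
    exact ⟨i, (drop_mem _ k).2 hi, fun i' hi' => hu i' ((drop_mem _ k).1 hi')⟩
  have hd0 : ∀ i, 0 ≤ bval (v i) (B i) - bval (v i) (Ad i) := fun i => by
    have := hle' i; simp only [hAdDef]; linarith
  have hgap : ω ≤ (∑ i, bval (v i) (B i)) - ∑ i, bval (v i) (Ad i) := by
    apply hgapSW B Ad hB hAdAlloc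
    have h1 : 0 < ∑ i, (bval (v i) (B i) - bval (v i) (Ad i)) :=
      Finset.sum_pos' (fun i _ => hd0 i) ⟨a, Finset.mem_univ a, by
        simp only [hAdDef]; linarith⟩
    rw [Finset.sum_sub_distrib] at h1
    linarith
  -- the lifted allocation B'
  set B' : Fin n → Finset (Fin (m+1)) :=
    fun i => (B i).image Fin.castSucc ∪ (A i).filter (fun j => j = Fin.last m)
    with hB'def
  have memB' : ∀ (i : Fin n) (j : Fin (m+1)), j ∈ B' i ↔
      (∃ k ∈ B i, k.castSucc = j) ∨ (j ∈ A i ∧ j = Fin.last m) := by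
    intro i j
    simp [hB'def, Finset.mem_union, Finset.mem_image, Finset.mem_filter]
  have hB'Alloc : IsAlloc B' := by
    intro j
    rcases Fin.eq_castSucc_or_eq_last j with ⟨k, rfl⟩ | rfl
    · obtain ⟨i, hi, hu⟩ := hB k
      refine ⟨i, (memB' i _).2 (Or.inl ⟨k, hi, rfl⟩), fun i' hi' => ?_⟩
      rcases (memB' i' _).1 hi' with ⟨k', hk', hkk⟩ | ⟨_, hlst⟩
      · exact hu i' (by rwa [Fin.castSucc_injective m hkk] at hk')
      · exact absurd hlst (Fin.castSucc_lt_last k).ne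
    · obtain ⟨i, hi, hu⟩ := hA (Fin.last m)
      refine ⟨i, (memB' i _).2 (Or.inr ⟨hi, rfl⟩), fun i' hi' => ?_⟩
      rcases (memB' i' _).1 hi' with ⟨k', _, hkk⟩ | ⟨hA', _⟩
      · exact absurd hkk (Fin.castSucc_lt_last k').ne
      · exact hu i' hA'
  -- bundle value decompositions
  set X : Fin n → ℝ := fun i => ∑ k ∈ B i, vb i k.castSucc with hXdef
  set Y : Fin n → ℝ := fun i => ∑ k ∈ Ad i, vb i k.castSucc with hYdef
  have hdropB' : ∀ i, drop (B' i) = B i := by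
    intro i; ext k
    rw [drop_mem, memB']
    constructor
    · rintro (⟨k', hk', hkk⟩ | ⟨_, hlst⟩)
      · rwa [Fin.castSucc_injective m hkk] at hk'
      · exact absurd hlst (Fin.castSucc_lt_last k).ne
    · intro h; exact Or.inl ⟨k, h, rfl⟩
  have hlastB' : ∀ i, (Fin.last m ∈ B' i ↔ Fin.last m ∈ A i) := by
    intro i
    rw [memB']
    constructor
    · rintro (⟨k', _, hkk⟩ | ⟨h, _⟩)
      · exact absurd hkk (Fin.castSucc_lt_last k').ne
      · exact h
    · intro h; exact Or.inr ⟨h, rfl⟩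
  have hvalB' : ∀ i, bval (vb i) (B' i)
      = X i + (if Fin.last m ∈ A i then lam / 2 else 0) := by
    intro i
    rw [bval, sum_split, hdropB' i, hlast i]
    congr 1
    simp [hlastB' i]
  have hvalA : ∀ i, bval (vb i) (A i)
      = Y i + (if Fin.last m ∈ A i then lam / 2 else 0) := by
    intro i
    rw [bval, sum_split, hlast i]
  -- per-agent bounds
  have hXlb : ∀ i, bval (v i) (B i) - ε * ((B i).card : ℝ) ≤ X i := by
    intro i
    have : ∑ k ∈ B i, (v i k - ε) ≤ X i :=
      Finset.sum_le_sum fun k _ => (hpert i k).1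
    rw [Finset.sum_sub_distrib, Finset.sum_const, nsmul_eq_mul] at this
    rw [bval]; linarith [this]
  have hYub : ∀ i, Y i ≤ bval (v i) (Ad i) := fun i =>
    Finset.sum_le_sum fun k _ => (hpert i k).2
  have hkey : ∀ i, η * (bval (v i) (B i) - bval (v i) (Ad i))
      - 2 * ε * ((B i).card : ℝ) ≤ (w i + η) * (X i - Y i) := by
    intro i
    have h1 : bval (v i) (B i) - ε * ((B i).card : ℝ) - bval (v i) (Ad i)
        ≤ X i - Y i := by linarith [hXlb i, hYub i]
    have hc0 : (0:ℝ) ≤ ((B i).card : ℝ) := Nat.cast_nonneg _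
    nlinarith [mul_le_mul_of_nonneg_left h1 (show (0:ℝ) ≤ w i + η by linarith [hw0 i]),
      mul_nonneg (hw0 i) (hd0 i), mul_nonneg (mul_nonneg (hw0 i) hε0.le) hc0,
      mul_nonneg hε0.le hc0, hd0 i, hw0 i, hw1 i]
  -- total card of B is m
  have hcardN : ∑ i, (B i).card = m := by
    have hone : ∀ k : Fin m, (∑ i, if k ∈ B i then (1:ℕ) else 0) = 1 := by
      intro k
      obtain ⟨i, hi, hu⟩ := hB k
      rw [Finset.sum_eq_single i (fun i' _ hne => if_neg (fun h => hne (hu i' h)))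
        (fun h => absurd (Finset.mem_univ i) h)]
      exact if_pos hi
    calc ∑ i, (B i).card = ∑ i, ∑ k : Fin m, (if k ∈ B i then (1:ℕ) else 0) := by
          refine Finset.sum_congr rfl fun i _ => ?_
          rw [Finset.sum_ite_mem, Finset.univ_inter, Finset.card_eq_sum_ones]
      _ = ∑ k : Fin m, ∑ i, (if k ∈ B i then (1:ℕ) else 0) := Finset.sum_comm
      _ = ∑ k : Fin m, 1 := Finset.sum_congr rfl fun k _ => hone k
      _ = m := by simp
  have hcard : ∑ i, ((B i).card : ℝ) = (m : ℝ) := by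
    rw [← Nat.cast_sum, hcardN]
  -- assemble
  have hsum : ∑ i, (η * (bval (v i) (B i) - bval (v i) (Ad i))
      - 2 * ε * ((B i).card : ℝ)) ≤ ∑ i, (w i + η) * (X i - Y i) :=
    Finset.sum_le_sum fun i _ => hkey i
  have hLHS : ∑ i, (η * (bval (v i) (B i) - bval (v i) (Ad i))
      - 2 * ε * ((B i).card : ℝ))
      = η * ((∑ i, bval (v i) (B i)) - ∑ i, bval (v i) (Ad i)) - 2 * ε * m := by
    rw [Finset.sum_sub_distrib, ← Finset.mul_sum, ← Finset.mul_sum, hcard,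
      Finset.sum_sub_distrib]
  have hD : ∑ i, (w i + η) * (X i - Y i)
      = (∑ i, (w i + η) * bval (vb i) (B' i))
        - ∑ i, (w i + η) * bval (vb i) (A i) := by
    rw [← Finset.sum_sub_distrib]
    refine Finset.sum_congr rfl fun i _ => ?_
    rw [hvalB' i, hvalA i]; ring
  have hopt' := hopt B' hB'Alloc
  have hηgap : η * ω ≤ η * ((∑ i, bval (v i) (B i)) - ∑ i, bval (v i) (Ad i)) :=
    mul_le_mul_of_nonneg_left hgap hη0.le
  rw [hLHS, hD] at hsum
  linarith
end

section
/- For each agent i ∈ [n], the set C_i = {w ∈ Δ_{n−1} : there exists an allocation A of {1,…,m+1} maximizing Σ_k (w_k + η) v̄_k(A_k) over all allocations such that p(A_i) ≥ p(A_j) for all j ∈ [n], where p_j = max_{k∈[n]} (w_k + η) v̄_k(j)} is a closed subset of the simplex Δ_{n−1}. -/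
/-!
There are only finitely many allocations, and for a fixed allocation every defining condition
of `C i` is a non-strict inequality between continuous functions of `w` (weighted welfares are
affine in `w`, item prices are finite maxima of affine functions). Hence `C i` is the simplex
intersected with a finite union of closed sets.
-/

open Finset

theorem Continuous.ciSup_of_finite {ι X L : Type*} [Finite ι] [TopologicalSpace X]
    [ConditionallyCompleteLinearOrder L] [TopologicalSpace L] [OrderClosedTopology L]
    {f : ι → X → L} (hf : ∀ i, Continuous (f i)) : Continuous fun x => ⨆ i, f i x := by
  rcases isEmpty_or_nonempty ι with hι | hι
  · simpa only [iSup_of_empty'] using continuous_const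
  · have := Fintype.ofFinite ι
    simp only [← Finset.sup'_univ_eq_ciSup]
    exact Continuous.finset_sup'_apply _ fun i _ => hf i

theorem stmt10_general (n m : ℕ) (vb : Fin n → Fin (m+1) → ℝ)
    (η : ℝ) (i : Fin n) :
    IsClosed {w : Fin n → ℝ | w ∈ stdSimplex ℝ (Fin n) ∧
      ∃ A : Fin n → Finset (Fin (m+1)), IsAlloc A ∧
        (∀ B : Fin n → Finset (Fin (m+1)), IsAlloc B →
          ∑ k, (w k + η) * bval (vb k) (B k) ≤ ∑ k, (w k + η) * bval (vb k) (A k)) ∧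
        ∀ j : Fin n,
          (∑ t ∈ A j, ⨆ k, (w k + η) * vb k t) ≤ ∑ t ∈ A i, ⨆ k, (w k + η) * vb k t} := by
  have welfare_continuous (B : Fin n → Finset (Fin (m+1))) :
      Continuous fun w : Fin n → ℝ => ∑ k, (w k + η) * bval (vb k) (B k) := by
    fun_prop
  have price_continuous (S : Finset (Fin (m+1))) :
      Continuous fun w : Fin n → ℝ => ∑ t ∈ S, ⨆ k, (w k + η) * vb k t :=
    continuous_finsetSum _ fun t _ => Continuous.ciSup_of_finite fun k => by fun_prop
  simp only [Set.ofPred_and, Set.ofPred_exists, Set.ofPred_forall, Set.ofPred_mem_eq]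
  refine (isClosed_stdSimplex ℝ (Fin n)).inter (isClosed_iUnion_of_finite fun A => ?_)
  refine isClosed_const.inter ((isClosed_iInter fun B => ?_).inter (isClosed_iInter fun j => ?_))
  · exact isClosed_iInter fun _ => isClosed_le (welfare_continuous B) (welfare_continuous A)
  · exact isClosed_le (price_continuous _) (price_continuous _)

/-- the set `C i` of weight vectors `w` in the simplex for which
some allocation maximizing the `(w+η)`-weighted welfare gives agent `i` a
highest-priced bundle (prices `p j = max_k (w k + η) * v̄ k j`) is closed. -/
theorem stmt10 (n m : ℕ) (hn : 0 < n) (vb : Fin n → Fin (m+1) → ℝ)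
    (η : ℝ) (hη : 0 < η) (i : Fin n) :
    IsClosed {w : Fin n → ℝ | w ∈ stdSimplex ℝ (Fin n) ∧
      ∃ A : Fin n → Finset (Fin (m+1)), IsAlloc A ∧
        (∀ B : Fin n → Finset (Fin (m+1)), IsAlloc B →
          ∑ k, (w k + η) * bval (vb k) (B k) ≤ ∑ k, (w k + η) * bval (vb k) (A k)) ∧
        ∀ j : Fin n,
          (∑ t ∈ A j, ⨆ k, (w k + η) * vb k t) ≤ ∑ t ∈ A i, ⨆ k, (w k + η) * vb k t} :=
  stmt10_general n m vb η i
end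

section
/- Assume: the items {1,…,m+1} are partitioned into goods G, chores C, and nonnegatively-valued items G_0; item m+1 satisfies v̄_i(m+1) = λ/2 for all agents i, for some λ > 0; every good j ∈ G satisfies v̄_i(j) ≥ λ/2 for all agents i; every chore j ∈ C satisfies v̄_i(j) ≤ −λ/2 for all agents i; m ≥ 2; V = max_{i,j} |v̄_i(j)| > 0; and η = λ/(2 m n V). Then for every w ∈ Δ_{n−1} there exists an agent i ∈ Supp(w) = {k : w_k > 0} such that w ∈ C_i, where C_i = {w ∈ Δ_{n−1} : there exists an allocation A maximizing Σ_k (w_k + η) v̄_k(A_k) over all allocations with p(A_i) ≥ p(A_j) for all j, where p_j = max_{k} (w_k + η) v̄_k(j)}. -/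
open Finset

/-- KKM covering: under the stated structure of the perturbed
instance, every weight vector `w` in the simplex lies in the set `C i` of some
agent `i` in the support of `w`; `C i` requires an allocation maximizing the
`(w+η)`-weighted welfare in which agent `i` holds a highest-priced bundle,
where `p j = max_k (w k + η) * v̄ k j`. -/
theorem stmt11 (n m : ℕ) (hn : 0 < n) (hm : 2 ≤ m)
    (vb : Fin n → Fin (m+1) → ℝ) (lam V η : ℝ) (hlam : 0 < lam)
    (G C G0 : Finset (Fin (m+1)))
    (hcover : ∀ j, j ∈ G ∨ j ∈ C ∨ j ∈ G0)
    (hGC : Disjoint G C) (hGG0 : Disjoint G G0) (hCG0 : Disjoint C G0)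
    (hGgood : ∀ j ∈ G, ∀ i, 0 < vb i j)
    (hCchore : ∀ j ∈ C, ∀ i, vb i j < 0)
    (hG0 : ∀ j ∈ G0, (∀ i, 0 ≤ vb i j) ∧ (∃ a, 0 < vb a j) ∧ (∃ b, vb b j = 0))
    (hlast : ∀ i, vb i (Fin.last m) = lam / 2)
    (hGlb : ∀ j ∈ G, ∀ i, lam / 2 ≤ vb i j)
    (hCub : ∀ j ∈ C, ∀ i, vb i j ≤ -(lam / 2))
    (hV : 0 < V) (hVub : ∀ i j, |vb i j| ≤ V) (hVmem : ∃ i j, |vb i j| = V)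
    (hη : η = lam / (2 * m * n * V)) :
    ∀ w ∈ stdSimplex ℝ (Fin n), ∃ i : Fin n, 0 < w i ∧
      ∃ A : Fin n → Finset (Fin (m+1)), IsAlloc A ∧
        (∀ B : Fin n → Finset (Fin (m+1)), IsAlloc B →
          ∑ k, (w k + η) * bval (vb k) (B k) ≤ ∑ k, (w k + η) * bval (vb k) (A k)) ∧
        ∀ j : Fin n,
          (∑ t ∈ A j, ⨆ k, (w k + η) * vb k t) ≤ ∑ t ∈ A i, ⨆ k, (w k + η) * vb k t := by
  intro w hw
  haveI : Nonempty (Fin n) := ⟨⟨0, hn⟩⟩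
  have hw0 : ∀ k, 0 ≤ w k := fun k => hw.1 k
  have hws : (∑ k, w k) = 1 := hw.2
  have hm0 : (0:ℝ) < m := by exact_mod_cast lt_of_lt_of_le (by norm_num) hm
  have hm2 : (2:ℝ) ≤ m := by exact_mod_cast hm
  have hn0 : (0:ℝ) < n := by exact_mod_cast hn
  have hη0 : 0 < η := by
    rw [hη]
    exact div_pos hlam (mul_pos (mul_pos (mul_pos two_pos hm0) hn0) hV)
  have hkey : η * V * (2 * m * n) = lam := by
    rw [hη]; field_simp
  have hbdd : ∀ t, BddAbove (Set.range fun k => (w k + η) * vb k t) :=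
    fun t => Set.Finite.bddAbove (Set.finite_range _)
  have hPge : ∀ t k, (w k + η) * vb k t ≤ ⨆ k', (w k' + η) * vb k' t :=
    fun t k => le_ciSup (hbdd t) k
  have hPach : ∀ t, ∃ k, (⨆ k', (w k' + η) * vb k' t) = (w k + η) * vb k t := by
    intro t
    obtain ⟨k, hk⟩ := Finite.exists_max (fun k => (w k + η) * vb k t)
    exact ⟨k, le_antisymm (ciSup_le hk) (hPge t k)⟩
  obtain ⟨i, hi⟩ := Finite.exists_max w
  have hwin : 1 ≤ (n:ℝ) * w i := by
    have h1 : (∑ k, w k) ≤ ∑ _k : Fin n, w i := Finset.sum_le_sum (fun k _ => hi k)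
    rw [hws, Finset.sum_const, Finset.card_univ, Fintype.card_fin, nsmul_eq_mul] at h1
    exact h1
  have hwip : 0 < w i := by nlinarith
  have hPlast : (⨆ k, (w k + η) * vb k (Fin.last m)) = (w i + η) * (lam/2) := by
    refine le_antisymm (ciSup_le fun k => ?_) ?_
    · rw [hlast k]
      have := hi k
      nlinarith
    · have := hPge (Fin.last m) i
      rwa [hlast i] at this
  have hcex : ∀ t : Fin (m+1), ∃ k,
      ((⨆ k', (w k' + η) * vb k' t) = (w k + η) * vb k t) ∧ (t = Fin.last m → k = i) := by
    intro t
    by_cases ht : t = Fin.last m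
    · subst ht
      refine ⟨i, ?_, fun _ => rfl⟩
      rw [hlast i]; exact hPlast
    · obtain ⟨k, hk⟩ := hPach t
      exact ⟨k, hk, fun h => absurd h ht⟩
  choose c hc1 hc2 using hcex
  set A : Fin n → Finset (Fin (m+1)) := fun k => Finset.univ.filter (fun t => c t = k) with hAdef
  have hmemA : ∀ t k, t ∈ A k ↔ c t = k := by intro t k; simp [hAdef]
  have hA : IsAlloc A := fun t =>
    ⟨c t, (hmemA t _).2 rfl, fun k hk => ((hmemA t k).1 hk).symm⟩
  have hpart : ∀ (B : Fin n → Finset (Fin (m+1))), IsAlloc B →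
      ∀ g : Fin (m+1) → ℝ, ∑ k, ∑ t ∈ B k, g t = ∑ t, g t := by
    intro B hB g
    calc ∑ k, ∑ t ∈ B k, g t = ∑ k, ∑ t, if t ∈ B k then g t else 0 := by
          refine Finset.sum_congr rfl fun k _ => ?_
          rw [Finset.sum_ite_mem, Finset.univ_inter]
      _ = ∑ t, ∑ k, if t ∈ B k then g t else 0 := Finset.sum_comm
      _ = ∑ t, g t := by
          refine Finset.sum_congr rfl fun t _ => ?_
          obtain ⟨k0, hk0, huniq⟩ := hB t
          rw [Finset.sum_eq_single k0]
          · simp [hk0]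
          · intro k _ hne
            simp only [ite_eq_right_iff]
            intro hk
            exact absurd (huniq k hk) hne
          · intro h
            exact absurd (Finset.mem_univ k0) h
  have hexp : ∀ (B : Fin n → Finset (Fin (m+1))),
      ∑ k, (w k + η) * bval (vb k) (B k) = ∑ k, ∑ t ∈ B k, (w k + η) * vb k t := by
    intro B
    refine Finset.sum_congr rfl fun k _ => ?_
    rw [bval, Finset.mul_sum]
  have hwelA : ∑ k, (w k + η) * bval (vb k) (A k) = ∑ t, ⨆ k, (w k + η) * vb k t := by
    rw [hexp]
    rw [← hpart A hA (fun t => ⨆ k, (w k + η) * vb k t)]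
    refine Finset.sum_congr rfl fun k _ => Finset.sum_congr rfl fun t ht => ?_
    have hct : c t = k := (hmemA t k).1 ht
    rw [← hct]
    exact (hc1 t).symm
  have hmaxwel : ∀ B : Fin n → Finset (Fin (m+1)), IsAlloc B →
      ∑ k, (w k + η) * bval (vb k) (B k) ≤ ∑ k, (w k + η) * bval (vb k) (A k) := by
    intro B hB
    rw [hwelA, hexp]
    rw [← hpart B hB (fun t => ⨆ k, (w k + η) * vb k t)]
    exact Finset.sum_le_sum fun k _ => Finset.sum_le_sum fun t _ => hPge t k
  obtain ⟨j, hj⟩ := Finite.exists_max (fun j => ∑ t ∈ A j, ⨆ k, (w k + η) * vb k t)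
  by_cases hwj : 0 < w j
  · exact ⟨j, hwj, A, hA, hmaxwel, hj⟩
  exfalso
  have hwj0 : w j = 0 := le_antisymm (not_lt.1 hwj) (hw0 j)
  have hij : i ≠ j := by
    intro h
    rw [h, hwj0] at hwip
    exact lt_irrefl 0 hwip
  have hub : ∀ t ∈ A j, (⨆ k, (w k + η) * vb k t) ≤ η * V := by
    intro t ht
    have hct : c t = j := (hmemA t j).1 ht
    rw [hc1 t, hct, hwj0, zero_add]
    exact mul_le_mul_of_nonneg_left (le_of_abs_le (hVub j t)) hη0.le
  have hlastAi : Fin.last m ∈ A i := (hmemA _ i).2 (hc2 _ rfl)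
  have hAj_sub : A j ⊆ Finset.univ.erase (Fin.last m) := by
    intro t ht
    have hct : c t = j := (hmemA t j).1 ht
    exact Finset.mem_erase.2 ⟨fun hteq => hij ((hc2 t hteq).symm.trans hct), Finset.mem_univ t⟩
  have hcardAj : ((A j).card : ℝ) ≤ m := by
    have h1 := Finset.card_le_card hAj_sub
    rw [Finset.card_erase_of_mem (Finset.mem_univ _), Finset.card_univ, Fintype.card_fin] at h1
    exact_mod_cast h1
  have hsumAj : (∑ t ∈ A j, ⨆ k, (w k + η) * vb k t) ≤ (m:ℝ) * (η * V) := by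
    calc (∑ t ∈ A j, ⨆ k, (w k + η) * vb k t) ≤ (A j).card • (η * V) :=
          Finset.sum_le_card_nsmul _ _ _ hub
      _ = ((A j).card : ℝ) * (η * V) := nsmul_eq_mul _ _
      _ ≤ (m:ℝ) * (η * V) := by
          exact mul_le_mul_of_nonneg_right hcardAj (by positivity)
  have hnonneg : ∀ t ∈ A i, 0 ≤ ⨆ k, (w k + η) * vb k t := by
    intro t ht
    have hct : c t = i := (hmemA t i).1 ht
    rcases hcover t with hG1 | hC1 | h01
    · have h1 := hPge t i
      have h2 := hGgood t hG1 i
      nlinarith [hw0 i]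
    · exfalso
      have h1 : (⨆ k, (w k + η) * vb k t) = (w i + η) * vb i t := by
        rw [hc1 t, hct]
      have h2 : η * vb j t ≤ ⨆ k, (w k + η) * vb k t := by
        have := hPge t j
        rwa [hwj0, zero_add] at this
      have h3 : vb i t ≤ -(lam/2) := hCub t hC1 i
      have h4 : -V ≤ vb j t := neg_le_of_abs_le (hVub j t)
      have h5 : η * vb j t ≤ (w i + η) * vb i t := by rw [← h1]; exact h2
      have h6 : η * (-V) ≤ (w i + η) * (-(lam/2)) := by
        calc η * (-V) ≤ η * vb j t := mul_le_mul_of_nonneg_left h4 hη0.le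
          _ ≤ (w i + η) * vb i t := h5
          _ ≤ (w i + η) * (-(lam/2)) :=
              mul_le_mul_of_nonneg_left h3 (by linarith [hw0 i])
      have h7 := mul_le_mul_of_nonneg_right h6 (by positivity : (0:ℝ) ≤ 2 * m * n)
      nlinarith [h7, hkey, mul_nonneg (mul_nonneg (sub_nonneg.2 hwin) hlam.le) hm0.le,
        mul_pos (mul_pos (mul_pos hη0 hlam) hm0) hn0,
        mul_nonneg (by linarith : (0:ℝ) ≤ (m:ℝ) - 2) hlam.le]
    · have h1 := (hG0 t h01).1 i
      exact le_trans (mul_nonneg (by linarith [hw0 i]) h1) (hPge t i)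
  have hlow : (w i + η) * (lam/2) ≤ ∑ t ∈ A i, ⨆ k, (w k + η) * vb k t := by
    have h1 := Finset.single_le_sum hnonneg hlastAi
    rwa [hPlast] at h1
  have hchain := hj i
  have hfinal : (w i + η) * (lam/2) ≤ (m:ℝ) * (η * V) := by
    calc (w i + η) * (lam/2) ≤ ∑ t ∈ A i, ⨆ k, (w k + η) * vb k t := hlow
      _ ≤ ∑ t ∈ A j, ⨆ k, (w k + η) * vb k t := hchain
      _ ≤ (m:ℝ) * (η * V) := hsumAj
  have h8 := mul_le_mul_of_nonneg_right hfinal (by positivity : (0:ℝ) ≤ 2 * n)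
  nlinarith [h8, hkey, mul_nonneg (sub_nonneg.2 hwin) hlam.le,
    mul_pos (mul_pos hη0 hlam) hn0]
end

section
/- Assume: the items {1,…,m+1} are partitioned into goods G, chores C, and nonnegatively-valued items G_0; item m+1 satisfies v̄_i(m+1) = λ/2 for all agents i, for some λ > 0; every chore j ∈ C satisfies v̄_i(j) ≤ −λ/2 for all agents i; m ≥ 2; V = max_{i,j} |v̄_i(j)| > 0; and η = λ/(2 m n V). Let w ∈ Δ_{n−1} with Supp(w) ≠ [n], let A be any allocation maximizing Σ_k (w_k + η) v̄_k(A_k) over all allocations, and let ℓ be the agent with m+1 ∈ A_ℓ. Then w_ℓ = max_{i∈[n]} w_i, agent ℓ receives no chore (A_ℓ ∩ C = ∅), and with prices p_j = max_k (w_k + η) v̄_k(j), p(A_ℓ) ≥ λ/(2n). -/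
open Finset

/-!
With weights `c k = w k + η`, moving a single item `j` from its owner `ℓ` to another agent `k`
changes the weighted welfare by `c k * v̄ k j - c ℓ * v̄ ℓ j`, so a welfare maximizer gives every
item to an agent maximizing `c k * v̄ k j`. For the item `m+1`, valued `λ/2` by everyone, this
makes `w ℓ` maximal, hence `w ℓ ≥ 1/n`. A chore in `A ℓ` would then cost `ℓ` at least
`(1/n + η) λ/2`, more than the `η V = λ/(2mn)` it costs an agent of weight `0`. So every item of
`A ℓ` is valued nonnegatively by someone and has nonnegative price, and the price of `m+1` alone
is at least `w ℓ λ/2 ≥ λ/(2n)`.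
-/

section Welfare

variable {n : ℕ} {I : Type*}

def welfare (c : Fin n → ℝ) (v : Fin n → I → ℝ) (A : Fin n → Finset I) : ℝ :=
  ∑ k, c k * bval (v k) (A k)

noncomputable def price {ι : Type*} (c : ι → ℝ) (v : ι → I → ℝ) (j : I) : ℝ :=
  ⨆ k, c k * v k j

lemma le_price {ι : Type*} [Finite ι] (c : ι → ℝ) (v : ι → I → ℝ) (j : I) (k : ι) :
    c k * v k j ≤ price c v j :=
  le_ciSup (f := fun k => c k * v k j) (Set.finite_range _).bddAbove k

lemma price_nonneg {ι : Type*} [Finite ι] {c : ι → ℝ} {v : ι → I → ℝ} {j : I}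
    (hc : ∀ k, 0 ≤ c k) {k : ι} (hk : 0 ≤ v k j) : 0 ≤ price c v j :=
  (mul_nonneg (hc k) hk).trans (le_price c v j k)

lemma price_le_sum_price {ι : Type*} [Finite ι] {c : ι → ℝ} (hc : ∀ k, 0 ≤ c k)
    {v : ι → I → ℝ} {S : Finset I} (hS : ∀ t ∈ S, ∃ k, 0 ≤ v k t) {j : I} (hj : j ∈ S) :
    price c v j ≤ ∑ t ∈ S, price c v t :=
  single_le_sum (fun t ht => (hS t ht).elim fun _ hk => price_nonneg hc hk) hj

lemma IsAlloc.mem_iff {A : Fin n → Finset I} (hA : IsAlloc A) {j : I} {l : Fin n}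
    (hj : j ∈ A l) (i : Fin n) : j ∈ A i ↔ i = l :=
  ⟨fun hi => (hA j).unique hi hj, fun h => h ▸ hj⟩

variable [DecidableEq I]

lemma bval_erase (u : I → ℝ) (S : Finset I) (j : I) :
    bval u (S.erase j) = bval u S - if j ∈ S then u j else 0 := by
  unfold bval
  split_ifs with hj
  · exact sum_erase_eq_sub hj
  · rw [erase_eq_of_notMem hj, sub_zero]

def moveItem (A : Fin n → Finset I) (j : I) (k : Fin n) : Fin n → Finset I :=
  fun i => if i = k then insert j ((A i).erase j) else (A i).erase j

lemma mem_moveItem {A : Fin n → Finset I} {j t : I} {k i : Fin n} :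
    t ∈ moveItem A j k i ↔ (t = j ∧ i = k) ∨ (t ≠ j ∧ t ∈ A i) := by
  unfold moveItem
  split_ifs with hik <;> simp only [mem_insert, mem_erase] <;> tauto

lemma bval_moveItem (u : I → ℝ) (A : Fin n → Finset I) (j : I) (k i : Fin n) :
    bval u (moveItem A j k i) =
      bval u (A i) - (if j ∈ A i then u j else 0) + if i = k then u j else 0 := by
  unfold moveItem
  split_ifs with hik hj <;>
    simp_all [bval, sum_insert, add_comm]

lemma isAlloc_moveItem {A : Fin n → Finset I} (hA : IsAlloc A) (j : I) (k : Fin n) :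
    IsAlloc (moveItem A j k) := by
  intro t
  by_cases htj : t = j
  · exact ⟨k, mem_moveItem.2 (.inl ⟨htj, rfl⟩), fun i hi => by simpa [htj] using mem_moveItem.1 hi⟩
  · obtain ⟨i, hi, huniq⟩ := hA t
    exact ⟨i, mem_moveItem.2 (.inr ⟨htj, hi⟩),
      fun i' hi' => huniq i' (by simpa [htj] using mem_moveItem.1 hi')⟩

lemma welfare_moveItem {A : Fin n → Finset I} (hA : IsAlloc A) (c : Fin n → ℝ)
    (v : Fin n → I → ℝ) {j : I} {l : Fin n} (hj : j ∈ A l) (k : Fin n) :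
    welfare c v (moveItem A j k) = welfare c v A - c l * v l j + c k * v k j := by
  simp only [welfare, bval_moveItem, hA.mem_iff hj, mul_add, mul_sub, mul_ite, mul_zero,
    sum_add_distrib, sum_sub_distrib, sum_ite_eq', mem_univ, if_true]

lemma IsAlloc.mul_le_of_isMaxWelfare {A : Fin n → Finset I} (hA : IsAlloc A) {c : Fin n → ℝ}
    {v : Fin n → I → ℝ} (hmax : ∀ B, IsAlloc B → welfare c v B ≤ welfare c v A)
    {j : I} {l : Fin n} (hj : j ∈ A l) (k : Fin n) : c k * v k j ≤ c l * v l j := by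
  have := hmax _ (isAlloc_moveItem hA j k)
  rw [welfare_moveItem hA c v hj] at this
  linarith

lemma IsAlloc.le_of_isMaxWelfare_of_forall_eq {A : Fin n → Finset I} (hA : IsAlloc A)
    {c : Fin n → ℝ} {v : Fin n → I → ℝ} (hmax : ∀ B, IsAlloc B → welfare c v B ≤ welfare c v A)
    {j : I} {l : Fin n} (hj : j ∈ A l) {a : ℝ} (hv : ∀ k, v k j = a) (ha : 0 < a) (k : Fin n) :
    c k ≤ c l := by
  have := hA.mul_le_of_isMaxWelfare hmax hj k
  rw [hv, hv] at this
  exact le_of_mul_le_mul_right this ha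

end Welfare

lemma one_le_card_mul_of_mem_stdSimplex {ι : Type*} [Fintype ι] {w : ι → ℝ}
    (hw : w ∈ stdSimplex ℝ ι) {l : ι} (hl : ∀ i, w i ≤ w l) : 1 ≤ Fintype.card ι * w l := by
  have := sum_le_card_nsmul univ w (w l) fun i _ => hl i
  rwa [hw.2, card_univ, nsmul_eq_mul] at this

theorem stmt13_general (n m : ℕ) (hm : 2 ≤ m)
    (vb : Fin n → Fin (m+1) → ℝ) (lam V η : ℝ) (hlam : 0 < lam)
    (G C G0 : Finset (Fin (m+1)))
    (hcover : ∀ j, j ∈ G ∨ j ∈ C ∨ j ∈ G0)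
    (hGgood : ∀ j ∈ G, ∀ i, 0 < vb i j)
    (hG0 : ∀ j ∈ G0, (∀ i, 0 ≤ vb i j) ∧ (∃ a, 0 < vb a j) ∧ (∃ b, vb b j = 0))
    (hlast : ∀ i, vb i (Fin.last m) = lam / 2)
    (hCub : ∀ j ∈ C, ∀ i, vb i j ≤ -(lam / 2))
    (hV : 0 < V) (hVub : ∀ i j, |vb i j| ≤ V)
    (hη : η = lam / (2 * m * n * V))
    (w : Fin n → ℝ) (hw : w ∈ stdSimplex ℝ (Fin n))
    (hsupp : ∃ i, w i = 0)
    (A : Fin n → Finset (Fin (m+1))) (hA : IsAlloc A)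
    (hopt : ∀ B : Fin n → Finset (Fin (m+1)), IsAlloc B →
      ∑ k, (w k + η) * bval (vb k) (B k) ≤ ∑ k, (w k + η) * bval (vb k) (A k))
    (l : Fin n) (hl : Fin.last m ∈ A l) :
    (∀ i : Fin n, w i ≤ w l) ∧
    (∀ j ∈ C, j ∉ A l) ∧
    lam / (2 * n) ≤ ∑ t ∈ A l, ⨆ k, (w k + η) * vb k t := by
  have hn : (0 : ℝ) < n := by exact_mod_cast l.pos
  have hm1 : (1 : ℝ) ≤ m := by exact_mod_cast (by omega : 1 ≤ m)
  have hη0 : 0 < η := hη ▸ by positivity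
  have hc : ∀ k, 0 ≤ w k + η := fun k => by linarith [hw.1 k]
  have hwmax : ∀ i, w i ≤ w l := fun i => by
    linarith [hA.le_of_isMaxWelfare_of_forall_eq hopt hl hlast (by positivity) i]
  have hwl : 1 ≤ n * w l := by simpa using one_le_card_mul_of_mem_stdSimplex hw hwmax
  have hshare : lam / (2 * n) ≤ w l * (lam / 2) := by rw [div_le_iff₀ (by positivity)]; nlinarith
  have hnoChore : ∀ j ∈ C, j ∉ A l := by
    intro j hjC hj
    obtain ⟨i₀, hi₀⟩ := hsupp
    have hηV : η * V = lam / (2 * m * n) := by rw [hη]; field_simp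
    have hm_le : lam / (2 * m * n) ≤ lam / (2 * n) :=
      div_le_div_of_nonneg_left hlam.le (by positivity) (by nlinarith)
    have := calc
      -(lam / (2 * m * n)) = η * -V := by rw [← hηV]; ring
      _ ≤ (w i₀ + η) * vb i₀ j := by
        rw [hi₀, zero_add]; exact mul_le_mul_of_nonneg_left (abs_le.1 (hVub i₀ j)).1 hη0.le
      _ ≤ (w l + η) * vb l j := hA.mul_le_of_isMaxWelfare hopt hj i₀
      _ ≤ (w l + η) * -(lam / 2) := mul_le_mul_of_nonneg_left (hCub j hjC l) (hc l)
      _ < -(lam / (2 * n)) := by nlinarith [mul_pos hη0 hlam]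
    linarith
  refine ⟨hwmax, hnoChore, ?_⟩
  have hvalued : ∀ t ∈ A l, ∃ k, 0 ≤ vb k t := by
    intro t ht
    rcases hcover t with hG | hC | hG0'
    · exact ⟨l, (hGgood t hG l).le⟩
    · exact absurd ht (hnoChore t hC)
    · obtain ⟨-, ⟨a, ha⟩, -⟩ := hG0 t hG0'
      exact ⟨a, ha.le⟩
  calc lam / (2 * n) ≤ (w l + η) * vb l (Fin.last m) := by
        rw [hlast]; nlinarith [mul_pos hη0 hlam]
    _ ≤ price (fun k => w k + η) vb (Fin.last m) := le_price (fun k => w k + η) vb _ l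
    _ ≤ ∑ t ∈ A l, price (fun k => w k + η) vb t := price_le_sum_price hc hvalued hl

/-- when `Supp(w) ≠ [n]`, in any allocation maximizing the
`(w+η)`-weighted welfare, the agent `ℓ` receiving the added item `m+1` has
maximum weight, receives no chore, and has bundle price at least `λ/(2n)`,
with prices `p j = max_k (w k + η) * v̄ k j`. -/
theorem stmt13 (n m : ℕ) (hn : 0 < n) (hm : 2 ≤ m)
    (vb : Fin n → Fin (m+1) → ℝ) (lam V η : ℝ) (hlam : 0 < lam)
    (G C G0 : Finset (Fin (m+1)))
    (hcover : ∀ j, j ∈ G ∨ j ∈ C ∨ j ∈ G0)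
    (hGC : Disjoint G C) (hGG0 : Disjoint G G0) (hCG0 : Disjoint C G0)
    (hGgood : ∀ j ∈ G, ∀ i, 0 < vb i j)
    (hCchore : ∀ j ∈ C, ∀ i, vb i j < 0)
    (hG0 : ∀ j ∈ G0, (∀ i, 0 ≤ vb i j) ∧ (∃ a, 0 < vb a j) ∧ (∃ b, vb b j = 0))
    (hlast : ∀ i, vb i (Fin.last m) = lam / 2)
    (hCub : ∀ j ∈ C, ∀ i, vb i j ≤ -(lam / 2))
    (hV : 0 < V) (hVub : ∀ i j, |vb i j| ≤ V) (hVmem : ∃ i j, |vb i j| = V)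
    (hη : η = lam / (2 * m * n * V))
    (w : Fin n → ℝ) (hw : w ∈ stdSimplex ℝ (Fin n))
    (hsupp : ∃ i, w i = 0)
    (A : Fin n → Finset (Fin (m+1))) (hA : IsAlloc A)
    (hopt : ∀ B : Fin n → Finset (Fin (m+1)), IsAlloc B →
      ∑ k, (w k + η) * bval (vb k) (B k) ≤ ∑ k, (w k + η) * bval (vb k) (A k))
    (l : Fin n) (hl : Fin.last m ∈ A l) :
    (∀ i : Fin n, w i ≤ w l) ∧
    (∀ j ∈ C, j ∉ A l) ∧
    lam / (2 * n) ≤ ∑ t ∈ A l, ⨆ k, (w k + η) * vb k t :=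
  stmt13_general n m hm vb lam V η hlam G C G0 hcover hGgood hG0 hlast hCub hV hVub hη w hw hsupp A
    hA hopt l hl
end
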